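/- The function s(v) = 1 - ∑_{k=1}^{∞} β_k v^{2k}, where β_1 = 1/4 and β_{k+1} = β_k · ((4k-1)(4k+1))/((2k+2)²), satisfies on (0, 1/2) the second-order ODE v(1-4v²)s'' + (1-4v²)s' + v·s = 0. -/

import Mathlib

/-!
Write `eulerS = 1 - S` with `S x = ∑ β_{k+1} x^{2k+2}`. Since `0 ≤ β_{k+1} ≤ 4^k`, the series and
its termwise derivatives converge for `|x| < 1/2`, so the ODE reduces to
`x (1 - 4x²) S'' + (1 - 4x²) S' + x S = x`. By the recurrence
`β_{k+2} (2k+4)² = β_{k+1} ((4k+4)² - 1)`, the `k`-th term of the left side is `g k - g (k+1)` with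
`g k = β_{k+1} (2k+2)² x^{2k+1}`, so the series telescopes to `g 0 = x`.
-/

/-- Coefficients of Euler's series in `v` (with `n = 2v`): `β 1 = 1/4`,
`β (k+1) = β k · ((4k-1)(4k+1))/((2k+2)²)`. -/
noncomputable def eulerBeta : ℕ → ℝ
  | 0 => 0
  | 1 => 1 / 4
  | (k + 2) =>
      eulerBeta (k + 1) *
        ((4 * (k + 1 : ℝ) - 1) * (4 * (k + 1 : ℝ) + 1)) / ((2 * (k + 1 : ℝ) + 2) ^ 2)

/-- Euler's series `s(v) = 1 - ∑_{k≥1} β_k v^{2k}`. -/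
noncomputable def eulerS (v : ℝ) : ℝ :=
  1 - ∑' k : ℕ, eulerBeta (k + 1) * v ^ (2 * (k + 1))

open Polynomial Topology

theorem hasSum_sub_succ {G : Type*} [AddCommGroup G] [TopologicalSpace G]
    [IsTopologicalAddGroup G] [T2Space G] {f : ℕ → G} (hf : Summable f) :
    HasSum (fun n => f n - f (n + 1)) (f 0) := by
  simpa using hf.hasSum.sub ((hasSum_nat_add_iff' 1).mpr hf.hasSum)

theorem hasDerivAt_tsum_mul_pow_succ {b : ℕ → ℝ} {e : ℕ → ℕ} {r x : ℝ} (hx : |x| < r)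
    (hb : Summable fun k => b k * x ^ (e k + 1))
    (hb' : Summable fun k => b k * (e k + 1) * r ^ e k) :
    HasDerivAt (fun y => ∑' k, b k * y ^ (e k + 1)) (∑' k, b k * (e k + 1) * x ^ e k) x := by
  have hxr : x ∈ Set.Ioo (-r) r := abs_lt.mp hx
  refine hasDerivAt_tsum_of_isPreconnected (g := fun k y => b k * y ^ (e k + 1))
    (g' := fun k y => b k * (e k + 1) * y ^ e k) hb'.abs isOpen_Ioo isPreconnected_Ioo
    (fun k y _ => ?_) (fun k y hy => ?_) hxr hb hxr
  · simpa [mul_assoc] using (hasDerivAt_pow (e k + 1) y).const_mul (b k)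
  · simp only [Real.norm_eq_abs, abs_mul, abs_pow]
    gcongr _ * ?_ ^ _
    exact (abs_lt.mpr hy).le.trans (le_abs_self r)

theorem eulerBeta_succ_succ (k : ℕ) :
    eulerBeta (k + 2) * (2 * k + 4) ^ 2 = eulerBeta (k + 1) * ((4 * k + 4) ^ 2 - 1) := by
  rw [eulerBeta]
  field_simp
  ring

theorem eulerBeta_succ_succ_eq (k : ℕ) :
    eulerBeta (k + 2) = eulerBeta (k + 1) * ((4 * k + 4) ^ 2 - 1) / (2 * k + 4) ^ 2 :=
  eq_div_of_mul_eq (by positivity) (eulerBeta_succ_succ k)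

theorem eulerBeta_succ_nonneg (k : ℕ) : 0 ≤ eulerBeta (k + 1) := by
  induction k with
  | zero => norm_num [eulerBeta]
  | succ k ih =>
    rw [eulerBeta_succ_succ_eq]
    have : (1 : ℝ) ≤ (4 * k + 4) ^ 2 := by nlinarith [k.cast_nonneg (α := ℝ)]
    exact div_nonneg (mul_nonneg ih (by linarith)) (by positivity)

theorem eulerBeta_succ_le (k : ℕ) : eulerBeta (k + 1) ≤ 4 ^ k := by
  induction k with
  | zero => norm_num [eulerBeta]
  | succ k ih =>
    rw [eulerBeta_succ_succ_eq, div_le_iff₀ (by positivity), pow_succ (4 : ℝ) k]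
    have : (1 : ℝ) ≤ (4 * k + 4) ^ 2 := by nlinarith [k.cast_nonneg (α := ℝ)]
    calc eulerBeta (k + 1) * ((4 * (k : ℝ) + 4) ^ 2 - 1)
        ≤ 4 ^ k * ((4 * (k : ℝ) + 4) ^ 2 - 1) := by gcongr
      _ ≤ 4 ^ k * 4 * (2 * (k : ℝ) + 4) ^ 2 := by
        rw [mul_assoc]; gcongr; nlinarith [k.cast_nonneg (α := ℝ)]

theorem summable_eval_mul_eulerBeta_mul_pow (p : ℝ[X]) (m : ℕ) {x : ℝ} (hx : |x| < 1 / 2) :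
    Summable fun k : ℕ => p.eval (k : ℝ) * eulerBeta (k + 1) * x ^ (2 * k + m) := by
  induction p using Polynomial.induction_on' with
  | add p q hp hq => simpa only [eval_add, add_mul] using hp.add hq
  | monomial j c =>
    have hq : ‖4 * x ^ 2‖ < 1 := by
      rw [Real.norm_eq_abs, abs_mul, abs_pow]; norm_num; nlinarith [sq_abs x, abs_nonneg x]
    have hgeom : Summable fun k : ℕ => (k : ℝ) ^ j * eulerBeta (k + 1) * x ^ (2 * k) := by
      refine .of_norm_bounded (summable_pow_mul_geometric_of_norm_lt_one j hq) fun k => ?_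
      rw [Real.norm_eq_abs, abs_mul, abs_mul, abs_pow, abs_pow, Nat.abs_cast,
        abs_of_nonneg (eulerBeta_succ_nonneg k), mul_pow, ← pow_mul,
        ← (even_two_mul k).pow_abs x, mul_assoc]
      gcongr
      exact eulerBeta_succ_le k
    simpa only [eval_monomial] using (hgeom.mul_left (c * x ^ m)).congr fun k => by ring

section

variable {x : ℝ}

theorem summable_eulerBeta_mul_pow (hx : |x| < 1 / 2) :
    Summable fun k : ℕ => eulerBeta (k + 1) * x ^ (2 * (k + 1)) :=
  (summable_eval_mul_eulerBeta_mul_pow 1 2 hx).congr fun k => by simp only [eval_one]; ring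

theorem summable_eulerBeta_mul_deriv_pow (hx : |x| < 1 / 2) :
    Summable fun k : ℕ => eulerBeta (k + 1) * (2 * k + 2) * x ^ (2 * k + 1) :=
  (summable_eval_mul_eulerBeta_mul_pow (2 * X + 2) 1 hx).congr fun k => by
    simp only [eval_add, eval_mul, eval_X, eval_ofNat]; ring

theorem summable_eulerBeta_mul_deriv2_pow (hx : |x| < 1 / 2) :
    Summable fun k : ℕ => eulerBeta (k + 1) * ((2 * k + 2) * (2 * k + 1)) * x ^ (2 * k) :=
  (summable_eval_mul_eulerBeta_mul_pow ((2 * X + 2) * (2 * X + 1)) 0 hx).congr fun k => by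
    simp only [eval_add, eval_mul, eval_X, eval_ofNat, eval_one]; ring

theorem hasDerivAt_eulerS (hx : |x| < 1 / 2) :
    HasDerivAt eulerS (-∑' k : ℕ, eulerBeta (k + 1) * (2 * k + 2) * x ^ (2 * k + 1)) x := by
  obtain ⟨r, hxr, hr⟩ := exists_between hx
  have hr' : |r| < 1 / 2 := by rwa [abs_of_pos ((abs_nonneg x).trans_lt hxr)]
  have h := hasDerivAt_tsum_mul_pow_succ (b := fun k => eulerBeta (k + 1))
    (e := fun k => 2 * k + 1) hxr (summable_eulerBeta_mul_pow hx)
    ((summable_eulerBeta_mul_deriv_pow hr').congr fun k => by push_cast; ring)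
  refine (h.const_sub 1).congr_deriv ?_
  congr 1
  exact tsum_congr fun k => by push_cast; ring

theorem deriv_deriv_eulerS (hx : |x| < 1 / 2) :
    deriv (deriv eulerS) x =
      -∑' k : ℕ, eulerBeta (k + 1) * ((2 * k + 2) * (2 * k + 1)) * x ^ (2 * k) := by
  obtain ⟨r, hxr, hr⟩ := exists_between hx
  have hr' : |r| < 1 / 2 := by rwa [abs_of_pos ((abs_nonneg x).trans_lt hxr)]
  have hderiv : deriv eulerS =ᶠ[𝓝 x]
      fun y => -∑' k : ℕ, eulerBeta (k + 1) * (2 * k + 2) * y ^ (2 * k + 1) := by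
    filter_upwards [(isOpen_lt continuous_abs continuous_const).mem_nhds hx] with y hy
    exact (hasDerivAt_eulerS hy).deriv
  have h := hasDerivAt_tsum_mul_pow_succ (b := fun k => eulerBeta (k + 1) * (2 * k + 2))
    (e := fun k => 2 * k) hxr (summable_eulerBeta_mul_deriv_pow hx)
    ((summable_eulerBeta_mul_deriv2_pow hr').congr fun k => by push_cast; ring)
  rw [hderiv.deriv_eq]
  refine (h.neg.congr_deriv ?_).deriv
  congr 1
  exact tsum_congr fun k => by push_cast; ring

theorem eulerBeta_series_ode (hx : |x| < 1 / 2) :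
    x * (1 - 4 * x ^ 2) * ∑' k : ℕ, eulerBeta (k + 1) * ((2 * k + 2) * (2 * k + 1)) * x ^ (2 * k)
      + (1 - 4 * x ^ 2) * ∑' k : ℕ, eulerBeta (k + 1) * (2 * k + 2) * x ^ (2 * k + 1)
      + x * ∑' k : ℕ, eulerBeta (k + 1) * x ^ (2 * (k + 1)) = x := by
  set g : ℕ → ℝ := fun k => eulerBeta (k + 1) * (2 * k + 2) ^ 2 * x ^ (2 * k + 1)
  have hg : Summable g :=
    (summable_eval_mul_eulerBeta_mul_pow ((2 * X + 2) ^ 2) 1 hx).congr fun k => by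
      simp only [g, eval_pow, eval_add, eval_mul, eval_X, eval_ofNat]; ring
  have hg0 : g 0 = x := by norm_num [g, eulerBeta]
  have hterm : ∀ k : ℕ,
      x * (1 - 4 * x ^ 2) * (eulerBeta (k + 1) * ((2 * k + 2) * (2 * k + 1)) * x ^ (2 * k))
        + (1 - 4 * x ^ 2) * (eulerBeta (k + 1) * (2 * k + 2) * x ^ (2 * k + 1))
        + x * (eulerBeta (k + 1) * x ^ (2 * (k + 1))) = g k - g (k + 1) := by
    intro k
    simp only [g]
    push_cast
    linear_combination x ^ (2 * k + 3) * eulerBeta_succ_succ k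
  have hseries :=
    (((summable_eulerBeta_mul_deriv2_pow hx).hasSum.mul_left (x * (1 - 4 * x ^ 2))).add
      ((summable_eulerBeta_mul_deriv_pow hx).hasSum.mul_left (1 - 4 * x ^ 2))).add
      ((summable_eulerBeta_mul_pow hx).hasSum.mul_left x)
  rw [funext hterm] at hseries
  exact hseries.unique (hg0 ▸ hasSum_sub_succ hg)

end

theorem euler_series_ode (v : ℝ) (hv : v ∈ Set.Ioo (0 : ℝ) (1 / 2)) :
    v * (1 - 4 * v ^ 2) * deriv (deriv eulerS) v +
        (1 - 4 * v ^ 2) * deriv eulerS v + v * eulerS v = 0 := by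
  have hv' : |v| < 1 / 2 := abs_lt.mpr ⟨by linarith [hv.1], hv.2⟩
  rw [deriv_deriv_eulerS hv', (hasDerivAt_eulerS hv').deriv, eulerS]
  linear_combination -eulerBeta_series_ode hv'
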